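/- Let S be a block lower-triangular matrix S = [[S_cc, 0],[S_c̄c, S_c̄c̄]] with S_cc ∈ R^{Nr×Ns}, S_c̄c ∈ R^{N̄r×Ns}, S_c̄c̄ ∈ R^{N̄r×N̄s}, where S has full row rank and S_cc has full row rank. Then there exists a block upper-triangular matrix U = [[U_cc, U_cc̄],[0, U_c̄c̄]] with U_cc ∈ R^{(Ns−Nr)×Ns}, U_cc̄ ∈ R^{(Ns−Nr)×N̄s}, U_c̄c̄ ∈ R^{(N̄s−N̄r)×N̄s}, such that U S^T = 0 and U has full row rank. -/
import Mathlib


open Matrix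

open Module Submodule in
/-- Any linearly independent family of size `m` in a finite-dimensional real vector
space of dimension at least `n + m` can be extended to a linearly independent
family of size `n + m`. -/
lemma exists_extend_linearIndependent (V : Type) [AddCommGroup V] [Module ℝ V]
    [FiniteDimensional ℝ V] (n m : ℕ) (hfin : n + m ≤ finrank ℝ V)
    (w : Fin m → V) (hw : LinearIndependent ℝ w) :
    ∃ u : Fin n → V, LinearIndependent ℝ (Sum.elim u w) := by
  obtain ⟨C, hC⟩ := (span ℝ (Set.range w)).exists_isCompl
  have hWfin : finrank ℝ (span ℝ (Set.range w)) = m := by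
    rw [finrank_span_eq_card hw, Fintype.card_fin]
  have hCfin : n ≤ finrank ℝ C := by
    have := Submodule.finrank_add_eq_of_isCompl hC
    omega
  let bC := Module.finBasis ℝ C
  let u : Fin n → V := fun i => (bC (Fin.castLE hCfin i) : V)
  have huC : ∀ i, u i ∈ C := fun i => (bC (Fin.castLE hCfin i)).2
  have huind : LinearIndependent ℝ u :=
    ((bC.linearIndependent.comp (Fin.castLE hCfin) (Fin.castLE_injective hCfin))).map'
      C.subtype (Submodule.ker_subtype _)
  refine ⟨u, huind.sum_type hw ?_⟩
  have h1 : span ℝ (Set.range u) ≤ C := span_le.2 (by rintro x ⟨i, rfl⟩; exact huC i)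
  exact (hC.disjoint.symm.mono_left h1).mono_right le_rfl

/-- existence of a block upper-triangular kernel matrix for a
block lower-triangular full-row-rank stoichiometric matrix. -/
theorem kernel_matrix_block_triangular
    (Ns Nbs Nr Nbr : ℕ) (hr : Nr ≤ Ns) (hbr : Nbr ≤ Nbs)
    (Scc : Matrix (Fin Nr) (Fin Ns) ℝ)
    (Scbc : Matrix (Fin Nbr) (Fin Ns) ℝ)
    (Scbcb : Matrix (Fin Nbr) (Fin Nbs) ℝ)
    (hS : (Matrix.fromBlocks Scc 0 Scbc Scbcb).rank = Nr + Nbr)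
    (hScc : Scc.rank = Nr) :
    ∃ (Ucc : Matrix (Fin (Ns - Nr)) (Fin Ns) ℝ)
      (Uccb : Matrix (Fin (Ns - Nr)) (Fin Nbs) ℝ)
      (Ucbcb : Matrix (Fin (Nbs - Nbr)) (Fin Nbs) ℝ),
      (Matrix.fromBlocks Ucc Uccb 0 Ucbcb) * (Matrix.fromBlocks Scc 0 Scbc Scbcb)ᵀ = 0 ∧
      (Matrix.fromBlocks Ucc Uccb 0 Ucbcb).rank = (Ns - Nr) + (Nbs - Nbr) := by
  classical
  open Module Submodule in
  -- dimension of the kernel of `S`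
  have hK : finrank ℝ
      (LinearMap.ker (Matrix.fromBlocks Scc 0 Scbc Scbcb).mulVecLin)
      = (Ns - Nr) + (Nbs - Nbr) := by
    have h1 := LinearMap.finrank_range_add_finrank_ker
      (Matrix.fromBlocks Scc 0 Scbc Scbcb).mulVecLin
    rw [Module.finrank_fintype_fun_eq_card] at h1
    simp only [Fintype.card_sum, Fintype.card_fin] at h1
    rw [Matrix.rank] at hS
    omega
  -- the kernel of `Scbcb` has dimension at least `Nbs - Nbr`
  have hKb : Nbs - Nbr ≤ Module.finrank ℝ (LinearMap.ker Scbcb.mulVecLin) := by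
    have h1 := LinearMap.finrank_range_add_finrank_ker Scbcb.mulVecLin
    rw [Module.finrank_fintype_fun_eq_card] at h1
    simp only [Fintype.card_fin] at h1
    have h2 : Scbcb.rank ≤ Nbr := by simpa using Scbcb.rank_le_card_height
    rw [Matrix.rank] at h2
    omega
  -- choose a linearly independent family in the kernel of `Scbcb`
  let bz := Module.finBasis ℝ (LinearMap.ker Scbcb.mulVecLin)
  let z : Fin (Nbs - Nbr) → (Fin Nbs → ℝ) := fun j => (bz (Fin.castLE hKb j) : Fin Nbs → ℝ)
  have hzker : ∀ j, Scbcb *ᵥ z j = 0 := fun j => (bz (Fin.castLE hKb j)).2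
  have hzind : LinearIndependent ℝ z :=
    ((bz.linearIndependent.comp (Fin.castLE hKb) (Fin.castLE_injective hKb))).map'
      (LinearMap.ker Scbcb.mulVecLin).subtype (Submodule.ker_subtype _)
  -- the corresponding rows `(0, z j)` lie in the kernel of `S`
  let w : Fin (Nbs - Nbr) → ((Fin Ns ⊕ Fin Nbs) → ℝ) := fun j => Sum.elim 0 (z j)
  have hwker : ∀ j, w j ∈ LinearMap.ker (Matrix.fromBlocks Scc 0 Scbc Scbcb).mulVecLin := by
    intro j
    simp only [LinearMap.mem_ker, Matrix.mulVecLin_apply]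
    show Matrix.fromBlocks Scc 0 Scbc Scbcb *ᵥ Sum.elim 0 (z j) = 0
    rw [Matrix.fromBlocks_mulVec]
    have e1 : (Sum.elim (0 : Fin Ns → ℝ) (z j)) ∘ Sum.inl = 0 := rfl
    have e2 : (Sum.elim (0 : Fin Ns → ℝ) (z j)) ∘ Sum.inr = z j := rfl
    rw [e1, e2, Matrix.mulVec_zero, Matrix.mulVec_zero, hzker j]
    simp
  have hwind : LinearIndependent ℝ w := by
    apply LinearIndependent.of_comp (LinearMap.funLeft ℝ ℝ Sum.inr)
    exact hzind
  -- lift to the kernel of `S` and extend to a full independent family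
  let w' : Fin (Nbs - Nbr) → LinearMap.ker (Matrix.fromBlocks Scc 0 Scbc Scbcb).mulVecLin :=
    fun j => ⟨w j, hwker j⟩
  have hw'ind : LinearIndependent ℝ w' :=
    hwind.of_comp (LinearMap.ker (Matrix.fromBlocks Scc 0 Scbc Scbcb).mulVecLin).subtype
  obtain ⟨u, huw⟩ := exists_extend_linearIndependent
    (LinearMap.ker (Matrix.fromBlocks Scc 0 Scbc Scbcb).mulVecLin)
    (Ns - Nr) (Nbs - Nbr) hK.ge w' hw'ind
  set v := Sum.elim u w' with hvdef
  have hrows : LinearIndependent ℝ (fun p => (v p : (Fin Ns ⊕ Fin Nbs) → ℝ)) :=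
    huw.map' (LinearMap.ker (Matrix.fromBlocks Scc 0 Scbc Scbcb).mulVecLin).subtype
      (Submodule.ker_subtype _)
  -- assemble the matrix `M` whose rows are the family `v`
  let M : Matrix (Fin (Ns - Nr) ⊕ Fin (Nbs - Nbr)) (Fin Ns ⊕ Fin Nbs) ℝ :=
    Matrix.of fun p => (v p : (Fin Ns ⊕ Fin Nbs) → ℝ)
  have hM21 : M.toBlocks₂₁ = 0 := by
    ext j i
    simp only [Matrix.toBlocks₂₁, M, Matrix.of_apply, hvdef, Sum.elim_inr]
    show w j (Sum.inl i) = 0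
    rfl
  have hMeq : Matrix.fromBlocks M.toBlocks₁₁ M.toBlocks₁₂ 0 M.toBlocks₂₂ = M := by
    rw [← hM21]; exact M.fromBlocks_toBlocks
  refine ⟨M.toBlocks₁₁, M.toBlocks₁₂, M.toBlocks₂₂, ?_, ?_⟩
  · rw [hMeq]
    ext p q
    have hv : Matrix.fromBlocks Scc 0 Scbc Scbcb *ᵥ (v p : (Fin Ns ⊕ Fin Nbs) → ℝ) = 0 :=
      (v p).2
    simp only [Matrix.mul_apply, Matrix.transpose_apply, Matrix.zero_apply]
    rw [show (0:ℝ) = (Matrix.fromBlocks Scc 0 Scbc Scbcb *ᵥ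
      (v p : (Fin Ns ⊕ Fin Nbs) → ℝ)) q from (congrFun hv q).symm]
    simp only [Matrix.mulVec, dotProduct, Matrix.of_apply, M,
      Fintype.sum_sum_type, mul_comm]
  · rw [hMeq]
    have hrm : M.rank = Fintype.card (Fin (Ns - Nr) ⊕ Fin (Nbs - Nbr)) := hrows.rank_matrix
    rw [hrm]
    simp
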